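/- Let U be a vector space with two compatible left symmetric products • and ∘, i.e., both are left symmetric and the mixed curvature K^{•,∘}(X,Y) = [L^•_X, L^∘_Y] − L^∘_{X•Y} + L^•_{Y∘X} satisfies K^{•,∘}(X,Y)Z = K^{•,∘}(Z,Y)X and K^{•,∘}(X,Y)Z = K^{•,∘}(X,Z)Y for all X,Y,Z. Then for any scalars a,b, the product a•+b∘ (given by X(a•+b∘)Y = a(X•Y)+b(X∘Y)) is left symmetric. -/

import Mathlib

/-!
`mixedCurv μ μ` is the curvature `K^μ(X,Y) = [L_X, L_Y] - L_{[X,Y]^μ}` of a single product `μ`, which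
vanishes exactly when `μ` is left symmetric. The mixed curvature is bilinear in the pair of products, so
`K^{a•+b∘} = a² K^• + b² K^∘ + ab (K^{•,∘}(X,Y) - K^{•,∘}(Y,X))`. The two symmetry conditions on
`K^{•,∘}` make it symmetric in its first two arguments, which kills the cross term.
-/

variable {k U : Type*} [Field k] [AddCommGroup U] [Module k U]

/-- The mixed curvature `K^{•,∘}(X,Y) = [L^•_X, L^∘_Y] − L^∘_{X•Y} + L^•_{Y∘X}`. -/
def mixedCurv (mulA mulB : U →ₗ[k] U →ₗ[k] U) (x y z : U) : U :=
  mulA x (mulB y z) - mulB y (mulA x z) - mulB (mulA x y) z + mulA (mulB y x) z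

namespace mixedCurv

variable (μ ν ρ σ : U →ₗ[k] U →ₗ[k] U)

theorem self_eq_zero_iff (u v w : U) :
    mixedCurv μ μ u v w = 0 ↔ μ (μ u v) w - μ u (μ v w) = μ (μ v u) w - μ v (μ u w) := by
  have h : mixedCurv μ μ u v w = -((μ (μ u v) w - μ u (μ v w)) - (μ (μ v u) w - μ v (μ u w))) := by
    simp only [mixedCurv]
    abel
  rw [h, neg_eq_zero, sub_eq_zero]

theorem add_left (x y z : U) :
    mixedCurv (μ + ν) ρ x y z = mixedCurv μ ρ x y z + mixedCurv ν ρ x y z := by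
  simp only [mixedCurv, LinearMap.add_apply, map_add]
  abel

theorem add_right (x y z : U) :
    mixedCurv μ (ρ + σ) x y z = mixedCurv μ ρ x y z + mixedCurv μ σ x y z := by
  simp only [mixedCurv, LinearMap.add_apply, map_add]
  abel

theorem smul_smul (a b : k) (x y z : U) :
    mixedCurv (a • μ) (b • ν) x y z = (a * b) • mixedCurv μ ν x y z := by
  simp only [mixedCurv, LinearMap.smul_apply, map_smul]
  module

theorem swap (x y z : U) : mixedCurv μ ν x y z = -mixedCurv ν μ y x z := by
  simp only [mixedCurv]
  abel

theorem add_self (x y z : U) :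
    mixedCurv (μ + ν) (μ + ν) x y z =
      mixedCurv μ μ x y z + mixedCurv ν ν x y z + (mixedCurv μ ν x y z - mixedCurv μ ν y x z) := by
  rw [add_left, add_right, add_right, swap ν μ x y z]
  abel

theorem comm_of_symm (h₁ : ∀ x y z : U, mixedCurv μ ν x y z = mixedCurv μ ν z y x)
    (h₂ : ∀ x y z : U, mixedCurv μ ν x y z = mixedCurv μ ν x z y) (x y z : U) :
    mixedCurv μ ν x y z = mixedCurv μ ν y x z := by
  rw [h₁, h₂, h₁]

end mixedCurv

/-- If `•` and `∘` are compatible left symmetric products, then any linear combination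
`a•+b∘` is a left symmetric product. -/
theorem compatible_linearCombination_leftSymmetric
    (mulA mulB : U →ₗ[k] U →ₗ[k] U)
    (hlsA : ∀ u v w : U,
      mulA (mulA u v) w - mulA u (mulA v w) = mulA (mulA v u) w - mulA v (mulA u w))
    (hlsB : ∀ u v w : U,
      mulB (mulB u v) w - mulB u (mulB v w) = mulB (mulB v u) w - mulB v (mulB u w))
    (hK1 : ∀ x y z : U, mixedCurv mulA mulB x y z = mixedCurv mulA mulB z y x)
    (hK2 : ∀ x y z : U, mixedCurv mulA mulB x y z = mixedCurv mulA mulB x z y)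
    (a b : k) (u v w : U) :
    (a • mulA + b • mulB) ((a • mulA + b • mulB) u v) w
        - (a • mulA + b • mulB) u ((a • mulA + b • mulB) v w)
      = (a • mulA + b • mulB) ((a • mulA + b • mulB) v u) w
        - (a • mulA + b • mulB) v ((a • mulA + b • mulB) u w) := by
  have hA := (mixedCurv.self_eq_zero_iff mulA u v w).2 (hlsA u v w)
  have hB := (mixedCurv.self_eq_zero_iff mulB u v w).2 (hlsB u v w)
  rw [← mixedCurv.self_eq_zero_iff, mixedCurv.add_self]
  simp only [mixedCurv.smul_smul, hA, hB, mixedCurv.comm_of_symm mulA mulB hK1 hK2 u v w, smul_zero,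
    sub_self, add_zero]
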